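/- Let n be an even positive integer and F : 𝔽_2^n → 𝔽_2^n a plateaued APN function. Then Nb_F is an integer congruent to 2 modulo 4. In particular, if at least one nonzero component of F is balanced, then Nb_F ≤ 2^{n+1} − 6. -/

import Mathlib

open Finset

/-- The integer-valued Walsh transform of `F : 𝔽_2^n → 𝔽_2^n`:
`W_F(b,a) = ∑_x (-1)^{⟨b,F(x)⟩ + ⟨a,x⟩}`. -/
def walshB (n : ℕ) (F : (Fin n → ZMod 2) → (Fin n → ZMod 2))
    (b a : Fin n → ZMod 2) : ℤ :=
  ∑ x : Fin n → ZMod 2, (-1 : ℤ) ^ ((∑ i, b i * F x i).val + (∑ i, a i * x i).val)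

/-- The imbalance `Nb_F = 2^{-n} ∑_{b ≠ 0} W_F(b,0)²`. -/
noncomputable def NbB (n : ℕ) (F : (Fin n → ZMod 2) → (Fin n → ZMod 2)) : ℝ :=
  ((2 : ℝ) ^ n)⁻¹ *
    ∑ b ∈ univ.filter (fun b : Fin n → ZMod 2 => b ≠ 0), ((walshB n F b 0 : ℝ)) ^ 2

/-- `F` is APN: for every `a ≠ 0` and every `b`, the equation `F(x+a) + F(x) = b` has at
most 2 solutions. -/
def IsAPNB (n : ℕ) (F : (Fin n → ZMod 2) → (Fin n → ZMod 2)) : Prop :=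
  ∀ a : Fin n → ZMod 2, a ≠ 0 → ∀ b : Fin n → ZMod 2,
    (univ.filter fun x => F (x + a) + F x = b).card ≤ 2

/-- The component `F_b` is `t`-plateaued: `|W_F(b,a)| ∈ {0, 2^{(n+t)/2}}` for all `a`,
expressed via squares of the integer Walsh coefficients. -/
def IsTPlateauedB (n : ℕ) (F : (Fin n → ZMod 2) → (Fin n → ZMod 2))
    (b : Fin n → ZMod 2) (t : ℕ) : Prop :=
  ∀ a : Fin n → ZMod 2, walshB n F b a = 0 ∨ (walshB n F b a) ^ 2 = 2 ^ (n + t)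

/-- `F` is plateaued: every nonzero component is `t_b`-plateaued for some `t_b`. -/
def IsPlateauedB (n : ℕ) (F : (Fin n → ZMod 2) → (Fin n → ZMod 2)) : Prop :=
  ∀ b : Fin n → ZMod 2, b ≠ 0 → ∃ t : ℕ, IsTPlateauedB n F b t

/-- The component `F_b` is bent: `|W_F(b,a)| = 2^{n/2}` for all `a`, i.e.
`W_F(b,a)² = 2^n`. -/
def IsBentB (n : ℕ) (F : (Fin n → ZMod 2) → (Fin n → ZMod 2))
    (b : Fin n → ZMod 2) : Prop :=
  ∀ a : Fin n → ZMod 2, (walshB n F b a) ^ 2 = 2 ^ n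

instance (n : ℕ) (F : (Fin n → ZMod 2) → (Fin n → ZMod 2)) (b : Fin n → ZMod 2) :
    Decidable (IsBentB n F b) := by
  unfold IsBentB; infer_instance


/-!
For a plateaued component `F_b` with amplitude `2^{(n+t_b)/2}`, Parseval gives
`∑_a W_F(b,a)^4 = 2^{3n+t_b}`. On the other hand `∑_{a,b} W_F(b,a)^4` counts, up to a power of two,
the solutions of `F(x) + F(x+z) = F(y) + F(y+z)`, which is determined by the APN property; comparing
the two yields `∑_{b≠0} 2^{t_b} = 2^{n+1} - 2`. The imbalance `Nb_F` is the part of this sum over the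
unbalanced components. Since `n` is even, every `t_b` is even, and a balanced component cannot be bent,
so `t_b ≥ 2` there: the terms dropped from the sum are multiples of `4`, at least `4` each.
-/

def signChar : AddChar (ZMod 2) ℤ := AddChar.zmodChar 2 (by norm_num : (-1 : ℤ) ^ 2 = 1)

lemma signChar_mul_self (u : ZMod 2) : signChar u * signChar u = 1 := by
  rw [← AddChar.map_add_eq_mul, CharTwo.add_self_eq_zero, AddChar.map_zero_eq_one]

lemma signChar_eq_one_iff {u : ZMod 2} : signChar u = 1 ↔ u = 0 := by
  revert u; decide

lemma add_eq_zero_iff_eq_of_zmod_two {ι : Type*} {x y : ι → ZMod 2} : x + y = 0 ↔ x = y := by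
  simp only [funext_iff, Pi.add_apply, Pi.zero_apply, CharTwo.add_eq_zero]

lemma add_self_eq_zero_of_zmod_two {ι : Type*} (x : ι → ZMod 2) : x + x = 0 :=
  add_eq_zero_iff_eq_of_zmod_two.2 rfl

section Orthogonality

variable {ι : Type*} [Fintype ι] [DecidableEq ι]

lemma sum_signChar_dotProduct (c : ι → ZMod 2) :
    ∑ a : ι → ZMod 2, signChar (a ⬝ᵥ c) = if c = 0 then 2 ^ Fintype.card ι else 0 := by
  let ψ : AddChar (ι → ZMod 2) ℤ :=
    { toFun := fun a => signChar (a ⬝ᵥ c)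
      map_zero_eq_one' := by simp
      map_add_eq_mul' := fun a b => by simp only [add_dotProduct, AddChar.map_add_eq_mul] }
  have hψ : ψ = 0 ↔ c = 0 := by
    refine ⟨fun h => funext fun i => ?_, fun h => by simp [AddChar.eq_zero_iff, ψ, h]⟩
    simpa [ψ, signChar_eq_one_iff] using AddChar.eq_zero_iff.1 h (Pi.single i 1)
  classical
  calc ∑ a, signChar (a ⬝ᵥ c) = ∑ a, ψ a := rfl
    _ = _ := by simp [AddChar.sum_eq_ite, hψ]

lemma sum_sq_sum_mul_signChar {X : Type*} [Fintype X] (G : X → ℤ)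
    (g : X → ι → ZMod 2) :
    ∑ b : ι → ZMod 2, (∑ x, G x * signChar (b ⬝ᵥ g x)) ^ 2
      = 2 ^ Fintype.card ι * ∑ x, ∑ y with g x = g y, G x * G y := by
  have hmul : ∀ b x y, G x * signChar (b ⬝ᵥ g x) * (G y * signChar (b ⬝ᵥ g y))
      = G x * G y * signChar (b ⬝ᵥ (g x + g y)) := by
    intro b x y
    rw [dotProduct_add, AddChar.map_add_eq_mul]
    ring
  simp_rw [sq, sum_mul_sum, hmul]
  rw [sum_comm, mul_sum]
  refine sum_congr rfl fun x _ => ?_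
  rw [sum_comm, sum_filter, mul_sum]
  refine sum_congr rfl fun y _ => ?_
  rw [← mul_sum, sum_signChar_dotProduct]
  simp_rw [add_eq_zero_iff_eq_of_zmod_two]
  split_ifs <;> ring

lemma sum_sq_sum_mul_signChar_dotProduct (G : (ι → ZMod 2) → ℤ) :
    ∑ a : ι → ZMod 2, (∑ x, G x * signChar (a ⬝ᵥ x)) ^ 2
      = 2 ^ Fintype.card ι * ∑ x, G x ^ 2 := by
  simpa [filter_eq, sq] using sum_sq_sum_mul_signChar G id

lemma sq_sum_mul_signChar_dotProduct (G : (ι → ZMod 2) → ℤ) (a : ι → ZMod 2) :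
    (∑ x, G x * signChar (a ⬝ᵥ x)) ^ 2
      = ∑ z, (∑ x, G x * G (x + z)) * signChar (a ⬝ᵥ z) := by
  rw [sq, sum_mul_sum]
  simp_rw [sum_mul]
  conv_rhs => rw [sum_comm]
  refine sum_congr rfl fun x _ => ?_
  rw [← Equiv.sum_comp (Equiv.addLeft x)]
  refine sum_congr rfl fun z _ => ?_
  simp only [Equiv.coe_addLeft, dotProduct_add, AddChar.map_add_eq_mul]
  linear_combination (G x * G (x + z) * signChar (a ⬝ᵥ z)) * signChar_mul_self (a ⬝ᵥ x)

end Orthogonality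

lemma even_of_sq_eq_prime_pow {m : ℤ} {p k : ℕ} (hp : p.Prime) (h : m ^ 2 = (p : ℤ) ^ k) :
    Even k := by
  have hm : m.natAbs ^ 2 = p ^ k := by
    simpa [Int.natAbs_pow] using congrArg Int.natAbs h
  obtain ⟨j, -, hj⟩ := (Nat.dvd_prime_pow hp).1 (Dvd.intro_left _ (sq m.natAbs ▸ hm))
  rw [hj, ← pow_mul] at hm
  exact ⟨j, by rw [← Nat.pow_right_injective hp.two_le hm]; ring⟩

section Walsh

variable {n : ℕ} (F : (Fin n → ZMod 2) → (Fin n → ZMod 2))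

lemma walshB_eq_sum (b a : Fin n → ZMod 2) :
    walshB n F b a = ∑ x, signChar (b ⬝ᵥ F x) * signChar (a ⬝ᵥ x) :=
  sum_congr rfl fun _ _ => pow_add _ _ _

lemma walshB_zero_left (a : Fin n → ZMod 2) :
    walshB n F 0 a = if a = 0 then 2 ^ n else 0 := by
  simp [walshB_eq_sum, dotProduct_comm a, sum_signChar_dotProduct]

lemma sum_walshB_sq (b : Fin n → ZMod 2) : ∑ a, walshB n F b a ^ 2 = 2 ^ (2 * n) := by
  simp_rw [walshB_eq_sum]
  rw [sum_sq_sum_mul_signChar_dotProduct]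
  simp [sq, signChar_mul_self, two_mul, pow_add]

lemma exists_walshB_ne_zero (b : Fin n → ZMod 2) : ∃ a, walshB n F b a ≠ 0 := by
  obtain ⟨a, -, ha⟩ := exists_ne_zero_of_sum_ne_zero (s := univ)
    (f := fun a => walshB n F b a ^ 2) (by rw [sum_walshB_sq]; positivity)
  exact ⟨a, fun h => ha (by simp [h])⟩

def autocorr (b z : Fin n → ZMod 2) : ℤ := ∑ x, signChar (b ⬝ᵥ (F (x + z) + F x))

lemma walshB_sq (b a : Fin n → ZMod 2) :
    walshB n F b a ^ 2 = ∑ z, autocorr F b z * signChar (a ⬝ᵥ z) := by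
  rw [walshB_eq_sum, sq_sum_mul_signChar_dotProduct]
  refine sum_congr rfl fun z _ => ?_
  simp only [autocorr, dotProduct_add, AddChar.map_add_eq_mul]
  exact congrArg (· * _) (sum_congr rfl fun x _ => mul_comm _ _)

lemma sum_walshB_pow_four (b : Fin n → ZMod 2) :
    ∑ a, walshB n F b a ^ 4 = 2 ^ n * ∑ z, autocorr F b z ^ 2 := by
  simp_rw [show ∀ a, walshB n F b a ^ 4 = (walshB n F b a ^ 2) ^ 2 from fun a => by ring,
    walshB_sq]
  simpa using sum_sq_sum_mul_signChar_dotProduct (autocorr F b)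

lemma sum_autocorr_sq (z : Fin n → ZMod 2) :
    ∑ b, autocorr F b z ^ 2 = 2 ^ n * ∑ x, (#{y | F (x + z) + F x = F (y + z) + F y} : ℤ) := by
  simpa [autocorr] using sum_sq_sum_mul_signChar (fun _ => (1 : ℤ)) (fun x => F (x + z) + F x)

variable {F} in
lemma IsAPNB.card_fiber_derivative_eq_two (hF : IsAPNB n F) {z : Fin n → ZMod 2} (hz : z ≠ 0)
    (x : Fin n → ZMod 2) : #{y | F (x + z) + F x = F (y + z) + F y} = 2 := by
  refine le_antisymm ?_ ?_
  · simpa only [eq_comm] using hF z hz (F (x + z) + F x)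
  · have hxzz : x + z + z = x := by rw [add_assoc, add_self_eq_zero_of_zmod_two, add_zero]
    refine one_lt_card.2 ⟨x, by simp, x + z, ?_, by simpa using hz⟩
    simp only [mem_filter, mem_univ, true_and, hxzz]
    exact add_comm _ _

variable {F} in
lemma IsAPNB.sum_sum_walshB_pow_four (hF : IsAPNB n F) :
    ∑ b, ∑ a, walshB n F b a ^ 4 = 2 ^ (4 * n) + 2 ^ (3 * n) * (2 ^ (n + 1) - 2) := by
  have hfiber : ∀ z, ∑ x, (#{y | F (x + z) + F x = F (y + z) + F y} : ℤ)
      = 2 ^ n * if z = 0 then 2 ^ n else 2 := by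
    intro z
    split_ifs with hz
    · subst hz; simp [add_self_eq_zero_of_zmod_two]
    · simp [hF.card_fiber_derivative_eq_two hz]
  have hcount : ∑ z : Fin n → ZMod 2, (if z = 0 then (2 : ℤ) ^ n else 2)
      = 2 ^ n + (2 ^ n - 1) * 2 := by
    simp [sum_ite, filter_eq', filter_ne']
  simp_rw [sum_walshB_pow_four, ← mul_sum]
  rw [sum_comm]
  simp_rw [sum_autocorr_sq, hfiber, ← mul_sum, hcount]
  ring

section Plateaued

variable {F} {b : Fin n → ZMod 2} {t : ℕ}

lemma IsTPlateauedB.sum_walshB_pow_four (h : IsTPlateauedB n F b t) :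
    ∑ a, walshB n F b a ^ 4 = 2 ^ (3 * n + t) := by
  have h4 : ∀ a, walshB n F b a ^ 4 = 2 ^ (n + t) * walshB n F b a ^ 2 := by
    intro a
    rcases h a with h0 | h2
    · simp [h0]
    · rw [← h2]; ring
  rw [sum_congr rfl fun a _ => h4 a, ← mul_sum, sum_walshB_sq]
  ring

lemma IsTPlateauedB.even (hn : Even n) (h : IsTPlateauedB n F b t) : Even t := by
  obtain ⟨a, ha⟩ := exists_walshB_ne_zero F b
  have hsq : walshB n F b a ^ 2 = ((2 : ℕ) : ℤ) ^ (n + t) := by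
    exact_mod_cast (h a).resolve_left ha
  exact (Nat.even_add.1 (even_of_sq_eq_prime_pow Nat.prime_two hsq)).1 hn

lemma IsTPlateauedB.ne_zero_of_walshB_eq_zero (h : IsTPlateauedB n F b t)
    (h0 : walshB n F b 0 = 0) : t ≠ 0 := by
  -- for `t = 0` the `2^n` squares `W_F(b,a)^2 ≤ 2^n` sum to `2^{2n}`, so none of them vanishes
  rintro rfl
  have hle : ∀ a ∈ univ, 0 ≤ 2 ^ n - walshB n F b a ^ 2 := by
    intro a _
    rcases h a with h | h <;> simp [h]
  have hsum : ∑ a, (2 ^ n - walshB n F b a ^ 2) = 0 := by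
    simp [sum_sub_distrib, sum_walshB_sq, two_mul, pow_add]
  have := (sum_eq_zero_iff_of_nonneg hle).1 hsum 0 (mem_univ _)
  simp [h0] at this

lemma IsTPlateauedB.two_le_of_walshB_eq_zero (hn : Even n) (h : IsTPlateauedB n F b t)
    (h0 : walshB n F b 0 = 0) : 2 ≤ t := by
  obtain ⟨k, rfl⟩ := h.even hn
  have := h.ne_zero_of_walshB_eq_zero h0
  omega

end Plateaued

variable {F} in
lemma IsAPNB.sum_two_pow_of_isTPlateauedB (hF : IsAPNB n F) (t : (Fin n → ZMod 2) → ℕ)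
    (ht : ∀ b, b ≠ 0 → IsTPlateauedB n F b (t b)) :
    ∑ b with b ≠ 0, (2 : ℤ) ^ t b = 2 ^ (n + 1) - 2 := by
  have h := hF.sum_sum_walshB_pow_four
  rw [← add_sum_erase univ _ (mem_univ 0), ← filter_ne', sum_congr rfl fun b hb =>
    (ht b (mem_filter.1 hb).2).sum_walshB_pow_four] at h
  simp only [walshB_zero_left, ite_pow, zero_pow four_ne_zero, sum_ite_eq', mem_univ, if_true,
    pow_add _ (3 * n), ← mul_sum] at h
  refine mul_left_cancel₀ (pow_ne_zero (3 * n) (two_ne_zero' ℤ)) ?_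
  linear_combination h

lemma NbB_eq_sum_two_pow (t : (Fin n → ZMod 2) → ℕ)
    (ht : ∀ b, b ≠ 0 → IsTPlateauedB n F b (t b)) :
    NbB n F = ((∑ b with b ≠ 0 ∧ walshB n F b 0 ≠ 0, (2 : ℤ) ^ t b : ℤ) : ℝ) := by
  have hsq : ∀ b ∈ univ.filter (· ≠ 0), (walshB n F b 0 : ℝ) ^ 2
      = 2 ^ n * if walshB n F b 0 ≠ 0 then 2 ^ t b else 0 := by
    intro b hb
    split_ifs with h0
    · exact_mod_cast ((ht b (mem_filter.1 hb).2 0).resolve_left h0).trans (pow_add _ _ _)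
    · simp [not_not.1 h0]
  rw [NbB, sum_congr rfl hsq, ← mul_sum, inv_mul_cancel_left₀ (by positivity), ← sum_filter,
    filter_filter]
  push_cast
  rfl

end Walsh

theorem plateaued_apn_imbalance_mod_four (n : ℕ) (hn : 0 < n) (hne : Even n)
    (F : (Fin n → ZMod 2) → (Fin n → ZMod 2))
    (hplat : IsPlateauedB n F) (hapn : IsAPNB n F) :
    (∃ N : ℤ, (N : ℝ) = NbB n F ∧ N % 4 = 2) ∧
    ((∃ b : Fin n → ZMod 2, b ≠ 0 ∧ walshB n F b 0 = 0) →
      NbB n F ≤ (2 : ℝ) ^ (n + 1) - 6) := by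
  choose! t ht using hplat
  set N : ℤ := ∑ b with b ≠ 0 ∧ walshB n F b 0 ≠ 0, 2 ^ t b
  set R : ℤ := ∑ b with b ≠ 0 ∧ walshB n F b 0 = 0, 2 ^ t b
  have hNR : N + R = 2 ^ (n + 1) - 2 := by
    rw [← hapn.sum_two_pow_of_isTPlateauedB t ht, ← sum_filter_not_add_sum_filter _
      (fun b => walshB n F b 0 = 0), filter_filter, filter_filter]
  have hRterm : ∀ b ∈ ({b | b ≠ 0 ∧ walshB n F b 0 = 0} : Finset _), 2 ≤ t b := fun b hb => by
    simp only [mem_filter, mem_univ, true_and] at hb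
    exact (ht b hb.1).two_le_of_walshB_eq_zero hne hb.2
  have hR : 2 ^ 2 ∣ R := dvd_sum fun b hb => pow_dvd_pow 2 (hRterm b hb)
  have h4 : (2 : ℤ) ^ 2 ∣ 2 ^ (n + 1) := pow_dvd_pow 2 (by omega)
  refine ⟨⟨N, (NbB_eq_sum_two_pow F t ht).symm, by omega⟩, ?_⟩
  rintro ⟨b, hb, hb0⟩
  have hR4 : 2 ^ 2 ≤ R := by
    have hbR : b ∈ ({b | b ≠ 0 ∧ walshB n F b 0 = 0} : Finset _) := by simp [hb, hb0]
    exact (pow_le_pow_right₀ one_le_two (hRterm b hbR)).trans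
      (single_le_sum (f := fun b => (2 : ℤ) ^ t b) (fun _ _ => by positivity) hbR)
  have hN : N ≤ 2 ^ (n + 1) - 6 := by omega
  rw [NbB_eq_sum_two_pow F t ht]
  exact (Int.cast_le.2 hN).trans_eq (by push_cast; rfl)
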